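/- With notation as below, assume in addition 𝒥_n(2ω) ≠ 0, and for q ∈ ℂ define β_ρ = q·((t₃(ρ)·t₄'(ρ) − t₄(ρ)·t₃'(ρ))·ℋ_n(2ω) + t₄'(ρ)·𝒥_n(2ω))/(t₃(ρ)·ℋ_n(2ω) + 𝒥_n(2ω)). Then for all sufficiently small ρ > 0 both D'_n(ρ) and t₃(ρ)·ℋ_n(2ω) + 𝒥_n(2ω) are nonzero, and lim_{ρ→0⁺} β_ρ = −(h_n(kω)/j_n(kω))·q. -/

import Mathlib

open Filter Topology
open scoped Nat

/-- `sphf n` from Rayleigh's formula: `sphf 0 t = sin t / t`,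
`sphf (m+1) t = (sphf m)'(t) / t`. -/
noncomputable def sphf : ℕ → ℝ → ℝ
  | 0 => fun t => Real.sin t / t
  | m + 1 => fun t => deriv (sphf m) t / t

/-- `sphg n` from Rayleigh's formula: `sphg 0 t = cos t / t`,
`sphg (m+1) t = (sphg m)'(t) / t`. -/
noncomputable def sphg : ℕ → ℝ → ℝ
  | 0 => fun t => Real.cos t / t
  | m + 1 => fun t => deriv (sphg m) t / t

/-- The spherical Bessel function of the first kind, `j_n(t) = (-1)ⁿ tⁿ f_n(t)`. -/
noncomputable def sphj (n : ℕ) (t : ℝ) : ℝ := (-1) ^ n * t ^ n * sphf n t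

/-- The spherical Bessel function of the second kind, `y_n(t) = -(-1)ⁿ tⁿ g_n(t)`. -/
noncomputable def sphy (n : ℕ) (t : ℝ) : ℝ := -((-1) ^ n * t ^ n * sphg n t)

/-- The spherical Hankel function of the first kind, `h_n(t) = j_n(t) + i y_n(t)`. -/
noncomputable def sphh (n : ℕ) (t : ℝ) : ℂ := (sphj n t : ℂ) + Complex.I * (sphy n t : ℂ)

/-- `𝒥_n(t) = j_n(t) + t j_n'(t)`. -/
noncomputable def sphJ (n : ℕ) (t : ℝ) : ℝ := sphj n t + t * deriv (sphj n) t

/-- `ℋ_n(t) = h_n(t) + t h_n'(t)`. -/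
noncomputable def sphH (n : ℕ) (t : ℝ) : ℂ := sphh n t + t * deriv (sphh n) t

/-- The determinant `D'_n(ρ) = ε₀^{-1/2} ρ h_n(ωρ) 𝒥_n(kω) - μ₀^{-1/2} k ℋ_n(ωρ) j_n(kω)`. -/
noncomputable def Dn' (ε₀ μ₀ ω k : ℝ) (n : ℕ) (ρ : ℝ) : ℂ :=
  (Real.sqrt ε₀)⁻¹ * ρ * sphh n (ω * ρ) * sphJ n (k * ω)
    - (Real.sqrt μ₀)⁻¹ * k * sphH n (ω * ρ) * sphj n (k * ω)

/-- `t₃(ρ) = (μ₀^{-1/2} k 𝒥_n(ωρ) j_n(kω) - ε₀^{-1/2} ρ j_n(ωρ) 𝒥_n(kω)) / D'_n(ρ)`. -/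
noncomputable def t3 (ε₀ μ₀ ω k : ℝ) (n : ℕ) (ρ : ℝ) : ℂ :=
  ((Real.sqrt μ₀)⁻¹ * k * sphJ n (ω * ρ) * sphj n (k * ω)
    - (Real.sqrt ε₀)⁻¹ * ρ * sphj n (ω * ρ) * sphJ n (k * ω)) / Dn' ε₀ μ₀ ω k n ρ

/-- `t₄(ρ) = ρ (𝒥_n(ωρ) h_n(ωρ) - j_n(ωρ) ℋ_n(ωρ)) / D'_n(ρ)`. -/
noncomputable def t4 (ε₀ μ₀ ω k : ℝ) (n : ℕ) (ρ : ℝ) : ℂ :=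
  (ρ * (sphJ n (ω * ρ) * sphh n (ω * ρ) - sphj n (ω * ρ) * sphH n (ω * ρ)))
    / Dn' ε₀ μ₀ ω k n ρ

/-- `t₃'(ρ) = (𝒥_n(kω) h_n(kω) - ℋ_n(kω) j_n(kω)) / D'_n(ρ)`. -/
noncomputable def t3' (ε₀ μ₀ ω k : ℝ) (n : ℕ) (ρ : ℝ) : ℂ :=
  (sphJ n (k * ω) * sphh n (k * ω) - sphH n (k * ω) * sphj n (k * ω))
    / Dn' ε₀ μ₀ ω k n ρ

/-- `t₄'(ρ) = (μ₀^{-1/2} k h_n(kω) ℋ_n(ωρ) - ε₀^{-1/2} ρ ℋ_n(kω) h_n(ωρ)) / D'_n(ρ)`. -/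
noncomputable def t4' (ε₀ μ₀ ω k : ℝ) (n : ℕ) (ρ : ℝ) : ℂ :=
  ((Real.sqrt μ₀)⁻¹ * k * sphh n (k * ω) * sphH n (ω * ρ)
    - (Real.sqrt ε₀)⁻¹ * ρ * sphH n (k * ω) * sphh n (ω * ρ)) / Dn' ε₀ μ₀ ω k n ρ

/-!
By Rayleigh's formulas, `t ^ (n+1) j_n(t)` and `t ^ (n+1) h_n(t)` are `(-1)ⁿ (P cos t + Q sin t)`
for polynomials `P, Q`; at `t = 0` the first vanishes and the second is some `c ≠ 0`. Hence, as
`t → 0⁺`, `t ^ (n+1)` times `j_n, 𝒥_n, h_n, ℋ_n` tends to `0, 0, c, -n c`. Multiplying numerator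
and denominator of `t₃` and `t₄'` by `(ωρ) ^ (n+1)` gives `t₃ → 0` and `t₄' → -h_n(kω)/j_n(kω)`,
the scaled `D'_n` tending to `μ₀^{-1/2} k j_n(kω) n c ≠ 0`. Rather than following `t₄` and `t₃'`
separately, one uses that, because `k = √μ₀ √ε₀`, the combination `t₃ t₄' - t₄ t₃'` collapses to a
quotient of the same kind as `t₃`, which tends to `0`. The limit of `β_ρ` then follows by
continuity of the rational expression.
-/

section RayleighPolynomials

open Polynomial

noncomputable def trigPoly (pq : ℝ[X] × ℝ[X]) (t : ℝ) : ℝ :=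
  pq.1.eval t * Real.cos t + pq.2.eval t * Real.sin t

noncomputable def trigPolyDeriv (pq : ℝ[X] × ℝ[X]) : ℝ[X] × ℝ[X] :=
  (derivative pq.1 + pq.2, derivative pq.2 - pq.1)

lemma hasDerivAt_trigPoly (pq : ℝ[X] × ℝ[X]) (t : ℝ) :
    HasDerivAt (trigPoly pq) (trigPoly (trigPolyDeriv pq) t) t := by
  have := ((pq.1.hasDerivAt t).mul (Real.hasDerivAt_cos t)).add
    ((pq.2.hasDerivAt t).mul (Real.hasDerivAt_sin t))
  refine HasDerivAt.congr_deriv (f := trigPoly pq) this ?_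
  simp only [trigPoly, trigPolyDeriv, eval_add, eval_sub]
  ring

lemma continuous_trigPoly (pq : ℝ[X] × ℝ[X]) : Continuous (trigPoly pq) :=
  (pq.1.continuous.mul Real.continuous_cos).add (pq.2.continuous.mul Real.continuous_sin)

lemma trigPoly_zero (pq : ℝ[X] × ℝ[X]) : trigPoly pq 0 = pq.1.eval 0 := by
  simp [trigPoly]

-- If `u = trigPoly r / t ^ (2m+1)`, then
-- `u' / t = (t (trigPoly r)' - (2m+1) trigPoly r) / t ^ (2m+3)`.
noncomputable def rayleighPoly (pq : ℝ[X] × ℝ[X]) : ℕ → ℝ[X] × ℝ[X]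
  | 0 => pq
  | m + 1 =>
    (X * (trigPolyDeriv (rayleighPoly pq m)).1 - C (2 * m + 1 : ℝ) * (rayleighPoly pq m).1,
     X * (trigPolyDeriv (rayleighPoly pq m)).2 - C (2 * m + 1 : ℝ) * (rayleighPoly pq m).2)

lemma rayleighPoly_eval_zero (pq : ℝ[X] × ℝ[X]) (m : ℕ) :
    (rayleighPoly pq m).1.eval 0 = (∏ i ∈ Finset.range m, -(2 * i + 1 : ℝ)) * pq.1.eval 0 ∧
    (rayleighPoly pq m).2.eval 0 = (∏ i ∈ Finset.range m, -(2 * i + 1 : ℝ)) * pq.2.eval 0 := by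
  induction m with
  | zero => simp [rayleighPoly]
  | succ m ih =>
    simp only [rayleighPoly, eval_sub, eval_mul, eval_X, eval_C, zero_mul, zero_sub,
      Finset.prod_range_succ, ih.1, ih.2]
    constructor <;> ring

lemma prod_range_neg_odd_ne_zero (m : ℕ) : ∏ i ∈ Finset.range m, -(2 * i + 1 : ℝ) ≠ 0 :=
  Finset.prod_ne_zero_iff.2 fun i _ => neg_ne_zero.2 (by positivity)

lemma eq_trigPoly_div_pow_of_rayleigh {u : ℕ → ℝ → ℝ} {pq : ℝ[X] × ℝ[X]}
    (h0 : ∀ t, u 0 t = trigPoly pq t / t) (hsucc : ∀ m t, u (m + 1) t = deriv (u m) t / t)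
    (m : ℕ) {t : ℝ} (ht : t ≠ 0) :
    u m t = trigPoly (rayleighPoly pq m) t / t ^ (2 * m + 1) := by
  induction m generalizing t with
  | zero => simpa [rayleighPoly] using h0 t
  | succ m ih =>
    have hloc : u m =ᶠ[𝓝 t] fun s => trigPoly (rayleighPoly pq m) s / s ^ (2 * m + 1) :=
      eventually_ne_nhds ht |>.mono fun s hs => ih hs
    have hder := ((hasDerivAt_trigPoly (rayleighPoly pq m) t).div
      (hasDerivAt_pow (2 * m + 1) t) (pow_ne_zero _ ht)).congr_of_eventuallyEq hloc
    rw [hsucc, hder.deriv]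
    simp only [trigPoly, trigPolyDeriv, rayleighPoly, eval_sub, eval_mul, eval_add, eval_X, eval_C]
    field_simp
    push_cast
    ring

lemma sphf_eq (n : ℕ) {t : ℝ} (ht : t ≠ 0) :
    sphf n t = trigPoly (rayleighPoly (0, 1) n) t / t ^ (2 * n + 1) :=
  eq_trigPoly_div_pow_of_rayleigh (fun t => by simp [sphf, trigPoly]) (fun _ _ => rfl) n ht

lemma sphg_eq (n : ℕ) {t : ℝ} (ht : t ≠ 0) :
    sphg n t = trigPoly (rayleighPoly (1, 0) n) t / t ^ (2 * n + 1) :=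
  eq_trigPoly_div_pow_of_rayleigh (fun t => by simp [sphg, trigPoly]) (fun _ _ => rfl) n ht

end RayleighPolynomials

section Scaling

variable {E : Type*} [NormedAddCommGroup E] [NormedSpace ℝ E]

lemma tendsto_pow_smul_nhdsGT_zero {u U : ℝ → E} (n : ℕ) (hU : ContinuousAt U 0)
    (hu : ∀ t, 0 < t → u t = (t ^ (n + 1))⁻¹ • U t) :
    Tendsto (fun t => t ^ (n + 1) • u t) (𝓝[>] 0) (𝓝 (U 0)) := by
  refine (hU.tendsto.mono_left nhdsWithin_le_nhds).congr' ?_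
  filter_upwards [self_mem_nhdsWithin] with t (ht : 0 < t)
  rw [hu t ht, smul_smul, mul_inv_cancel₀ (by positivity), one_smul]

-- Here `t ^ (n + 1) • (u t + t • u' t) = t • U' t - n • U t`.
lemma tendsto_pow_smul_add_smul_deriv_nhdsGT_zero {u U U' : ℝ → E} (n : ℕ)
    (hU : ∀ t, HasDerivAt U (U' t) t) (hU' : ContinuousAt U' 0)
    (hu : ∀ t, 0 < t → u t = (t ^ (n + 1))⁻¹ • U t) :
    Tendsto (fun t => t ^ (n + 1) • (u t + t • deriv u t)) (𝓝[>] 0) (𝓝 (-(n : ℝ) • U 0)) := by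
  have hlim : Tendsto (fun t => t • U' t - (n : ℝ) • U t) (𝓝 0) (𝓝 (-(n : ℝ) • U 0)) := by
    have := (tendsto_id.smul hU'.tendsto).sub (((hU 0).continuousAt.tendsto).const_smul (n : ℝ))
    simpa [neg_smul, zero_sub] using this
  refine (hlim.mono_left nhdsWithin_le_nhds).congr' ?_
  filter_upwards [self_mem_nhdsWithin] with t (ht : 0 < t)
  have hloc : u =ᶠ[𝓝 t] fun s => (s ^ (n + 1))⁻¹ • U s :=
    eventually_gt_nhds ht |>.mono fun s hs => hu s hs
  have hder := (((hasDerivAt_pow (n + 1) t).inv (by positivity)).smul (hU t)).congr_of_eventuallyEq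
    hloc
  rw [hder.deriv, hu t ht]
  simp only [Pi.inv_apply, Nat.add_sub_cancel, smul_add, smul_smul]
  match_scalars <;> field_simp; ring

end Scaling

section SphericalBessel

open Polynomial Complex

variable {n : ℕ} {t : ℝ}

lemma sphj_eq_inv_pow_smul (ht : t ≠ 0) :
    sphj n t = (t ^ (n + 1))⁻¹ • ((-1) ^ n * trigPoly (rayleighPoly (0, 1) n) t) := by
  rw [sphj, sphf_eq n ht, smul_eq_mul, show 2 * n + 1 = n + (n + 1) by ring, pow_add]
  field_simp

lemma sphy_eq_inv_pow_smul (ht : t ≠ 0) :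
    sphy n t = (t ^ (n + 1))⁻¹ • -((-1) ^ n * trigPoly (rayleighPoly (1, 0) n) t) := by
  rw [sphy, sphg_eq n ht, smul_eq_mul, show 2 * n + 1 = n + (n + 1) by ring, pow_add]
  field_simp

lemma tendsto_pow_mul_sphj (n : ℕ) :
    Tendsto (fun t : ℝ => (t : ℂ) ^ (n + 1) * sphj n t) (𝓝[>] 0) (𝓝 0) := by
  have := tendsto_pow_smul_nhdsGT_zero n
    (((continuous_trigPoly (rayleighPoly (0, 1) n)).const_mul ((-1) ^ n)).continuousAt)
    fun t ht => sphj_eq_inv_pow_smul ht.ne'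
  simp only [trigPoly_zero, (rayleighPoly_eval_zero _ n).1, eval_zero, mul_zero] at this
  simpa [Function.comp_def] using (continuous_ofReal.tendsto 0).comp this

lemma tendsto_pow_mul_sphJ (n : ℕ) :
    Tendsto (fun t : ℝ => (t : ℂ) ^ (n + 1) * sphJ n t) (𝓝[>] 0) (𝓝 0) := by
  have := tendsto_pow_smul_add_smul_deriv_nhdsGT_zero n
    (fun t => (hasDerivAt_trigPoly (rayleighPoly (0, 1) n) t).const_mul ((-1) ^ n))
    ((continuous_trigPoly _).const_mul ((-1) ^ n)).continuousAt
    fun t ht => sphj_eq_inv_pow_smul ht.ne'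
  simp only [trigPoly_zero, (rayleighPoly_eval_zero _ n).1, eval_zero, mul_zero, smul_zero] at this
  simpa [Function.comp_def, sphJ] using (continuous_ofReal.tendsto 0).comp this

noncomputable def sphhNum (n : ℕ) (t : ℝ) : ℂ :=
  (-1) ^ n * ((trigPoly (rayleighPoly (0, 1) n) t : ℂ) - I * trigPoly (rayleighPoly (1, 0) n) t)

lemma sphh_eq_inv_pow_smul (ht : t ≠ 0) : sphh n t = (t ^ (n + 1))⁻¹ • sphhNum n t := by
  rw [sphh, sphhNum, sphj_eq_inv_pow_smul ht, sphy_eq_inv_pow_smul ht, real_smul]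
  simp only [smul_eq_mul]
  push_cast
  ring

lemma hasDerivAt_sphhNum (n : ℕ) (t : ℝ) :
    HasDerivAt (sphhNum n) ((-1) ^ n * ((trigPoly (trigPolyDeriv (rayleighPoly (0, 1) n)) t : ℂ)
      - I * trigPoly (trigPolyDeriv (rayleighPoly (1, 0) n)) t)) t :=
  (((hasDerivAt_trigPoly _ t).ofReal_comp).sub
    ((hasDerivAt_trigPoly _ t).ofReal_comp.const_mul I)).const_mul _

lemma sphhNum_zero_ne_zero (n : ℕ) : sphhNum n 0 ≠ 0 := by
  refine mul_ne_zero (pow_ne_zero _ (by norm_num)) ?_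
  simp only [trigPoly_zero, (rayleighPoly_eval_zero (0, 1) n).1,
    (rayleighPoly_eval_zero (1, 0) n).1, eval_zero, eval_one, mul_zero, mul_one, ofReal_zero,
    zero_sub, neg_ne_zero]
  exact mul_ne_zero I_ne_zero (ofReal_ne_zero.2 (prod_range_neg_odd_ne_zero n))

lemma tendsto_pow_mul_sphh (n : ℕ) :
    Tendsto (fun t : ℝ => (t : ℂ) ^ (n + 1) * sphh n t) (𝓝[>] 0) (𝓝 (sphhNum n 0)) := by
  simpa [real_smul] using tendsto_pow_smul_nhdsGT_zero n
    (hasDerivAt_sphhNum n 0).continuousAt fun t ht => sphh_eq_inv_pow_smul ht.ne'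

lemma tendsto_pow_mul_sphH (n : ℕ) :
    Tendsto (fun t : ℝ => (t : ℂ) ^ (n + 1) * sphH n t) (𝓝[>] 0) (𝓝 (-n * sphhNum n 0)) := by
  have hcont : Continuous fun t => (-1) ^ n *
      ((trigPoly (trigPolyDeriv (rayleighPoly (0, 1) n)) t : ℂ)
        - I * trigPoly (trigPolyDeriv (rayleighPoly (1, 0) n)) t) := by
    have := continuous_trigPoly (trigPolyDeriv (rayleighPoly (0, 1) n))
    have := continuous_trigPoly (trigPolyDeriv (rayleighPoly (1, 0) n))
    fun_prop
  simpa [real_smul, sphH, mul_add] using tendsto_pow_smul_add_smul_deriv_nhdsGT_zero n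
    (hasDerivAt_sphhNum n) hcont.continuousAt fun t ht => sphh_eq_inv_pow_smul ht.ne'

end SphericalBessel

lemma tendsto_div_of_tendsto_mul {α 𝕜 : Type*} [Field 𝕜] [TopologicalSpace 𝕜]
    [IsTopologicalDivisionRing 𝕜] [T1Space 𝕜] {l : Filter α} {s f g : α → 𝕜} {a b : 𝕜}
    (hf : Tendsto (fun x => s x * f x) l (𝓝 a)) (hg : Tendsto (fun x => s x * g x) l (𝓝 b))
    (hb : b ≠ 0) : Tendsto (fun x => f x / g x) l (𝓝 (a / b)) :=
  (hf.div hg hb).congr' <| (hg.eventually_ne hb).mono fun _ hsg =>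
    mul_div_mul_left _ _ (left_ne_zero_of_mul hsg)

lemma tendsto_mul_nhdsGT_zero {ω : ℝ} (hω : 0 < ω) :
    Tendsto (fun ρ => ω * ρ) (𝓝[>] 0) (𝓝[>] 0) :=
  tendsto_iff_comap.2 (comap_mulLeft_nhdsGT_zero hω).ge

lemma tendsto_pow_mul_sub_mul {n : ℕ} {ω : ℝ} {X Y : ℝ → ℂ} {x₀ y₀ : ℂ} (hω : 0 < ω)
    (hX : Tendsto (fun t : ℝ => (t : ℂ) ^ (n + 1) * X t) (𝓝[>] 0) (𝓝 x₀))
    (hY : Tendsto (fun t : ℝ => (t : ℂ) ^ (n + 1) * Y t) (𝓝[>] 0) (𝓝 y₀)) (u v : ℂ) :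
    Tendsto (fun ρ : ℝ => ((ω * ρ : ℝ) : ℂ) ^ (n + 1) * (u * X (ω * ρ) - v * ρ * Y (ω * ρ)))
      (𝓝[>] 0) (𝓝 (u * x₀)) := by
  have hρ : Tendsto (fun ρ : ℝ => (ρ : ℂ)) (𝓝[>] 0) (𝓝 0) :=
    Complex.continuous_ofReal.tendsto' 0 0 Complex.ofReal_zero |>.mono_left nhdsWithin_le_nhds
  have := ((hX.comp (tendsto_mul_nhdsGT_zero hω)).const_mul u).sub
    ((hρ.const_mul v).mul (hY.comp (tendsto_mul_nhdsGT_zero hω)))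
  rw [mul_zero, zero_mul, sub_zero] at this
  refine this.congr fun ρ => ?_
  simp only [Function.comp_apply]
  ring

-- With `a = μ₀^{-1/2} k` and `e = ε₀^{-1/2}` the four products are the numerators of
-- `t₃ t₄' - t₄ t₃'`, and the right side is `-D'_n F`.
lemma cross_identity {K : Type*} [Field K] (a e ρ j J h H jk Jk hk Hk : K) (hae : a * e = 1) :
    (a * J * jk - e * ρ * j * Jk) * (a * hk * H - e * ρ * Hk * h)
      - ρ * (J * h - j * H) * (Jk * hk - Hk * jk)
      = -((e * ρ * h * Jk - a * H * jk) * (a * J * hk - e * ρ * j * Hk)) := by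
  linear_combination ρ * (J * h - j * H) * (Jk * hk - Hk * jk) * hae

section Cloak

variable {ε₀ μ₀ ω k : ℝ} {n : ℕ}

lemma t3_mul_t4'_sub_t4_mul_t3' (hε : 0 < ε₀) (hμ : 0 < μ₀) (hk : k = Real.sqrt (μ₀ * ε₀))
    {ρ : ℝ} (hD : Dn' ε₀ μ₀ ω k n ρ ≠ 0) :
    t3 ε₀ μ₀ ω k n ρ * t4' ε₀ μ₀ ω k n ρ - t4 ε₀ μ₀ ω k n ρ * t3' ε₀ μ₀ ω k n ρ
      = -(((Real.sqrt μ₀)⁻¹ * k * sphJ n (ω * ρ) * sphh n (k * ω)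
          - (Real.sqrt ε₀)⁻¹ * ρ * sphj n (ω * ρ) * sphH n (k * ω)) / Dn' ε₀ μ₀ ω k n ρ) := by
  have hae : (((Real.sqrt μ₀)⁻¹ : ℝ) : ℂ) * k * ((Real.sqrt ε₀)⁻¹ : ℝ) = 1 := by
    have := Real.sqrt_pos.2 hμ
    have := Real.sqrt_pos.2 hε
    have : (Real.sqrt μ₀)⁻¹ * k * (Real.sqrt ε₀)⁻¹ = 1 := by
      rw [hk, Real.sqrt_mul hμ.le]
      field_simp
    exact_mod_cast this
  rw [t3, t4, t3', t4', div_mul_div_comm, div_mul_div_comm, div_sub_div_same,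
    cross_identity _ _ _ _ _ _ _ _ _ _ _ hae, ← Dn', neg_div,
    mul_div_mul_left _ _ hD]

lemma tendsto_pow_mul_Dn' (hω : 0 < ω) :
    Tendsto (fun ρ : ℝ => ((ω * ρ : ℝ) : ℂ) ^ (n + 1) * Dn' ε₀ μ₀ ω k n ρ) (𝓝[>] 0)
      (𝓝 ((Real.sqrt μ₀)⁻¹ * k * sphj n (k * ω) * (n * sphhNum n 0))) := by
  have := (tendsto_pow_mul_sub_mul hω (tendsto_pow_mul_sphH n) (tendsto_pow_mul_sphh n)
    (((Real.sqrt μ₀)⁻¹ : ℝ) * k * sphj n (k * ω)) (((Real.sqrt ε₀)⁻¹ : ℝ) * sphJ n (k * ω))).neg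
  rw [neg_mul_eq_mul_neg, neg_mul, neg_neg] at this
  refine this.congr fun ρ => ?_
  rw [Dn']
  ring

lemma eventually_Dn'_ne_zero (hω : 0 < ω)
    (hL : ((Real.sqrt μ₀)⁻¹ : ℝ) * (k : ℂ) * sphj n (k * ω) * (n * sphhNum n 0) ≠ 0) :
    ∀ᶠ ρ in 𝓝[>] 0, Dn' ε₀ μ₀ ω k n ρ ≠ 0 :=
  ((tendsto_pow_mul_Dn' hω).eventually_ne hL).mono fun _ h => right_ne_zero_of_mul h

lemma tendsto_t3 (hω : 0 < ω)
    (hL : ((Real.sqrt μ₀)⁻¹ : ℝ) * (k : ℂ) * sphj n (k * ω) * (n * sphhNum n 0) ≠ 0) :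
    Tendsto (t3 ε₀ μ₀ ω k n) (𝓝[>] 0) (𝓝 0) := by
  have := tendsto_div_of_tendsto_mul (tendsto_pow_mul_sub_mul hω
    (tendsto_pow_mul_sphJ n) (tendsto_pow_mul_sphj n)
    (((Real.sqrt μ₀)⁻¹ : ℝ) * k * sphj n (k * ω)) (((Real.sqrt ε₀)⁻¹ : ℝ) * sphJ n (k * ω)))
    (tendsto_pow_mul_Dn' (ε₀ := ε₀) hω) hL
  rw [mul_zero, zero_div] at this
  refine this.congr fun ρ => ?_
  rw [t3]
  ring

lemma tendsto_t4' (hω : 0 < ω)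
    (hL : ((Real.sqrt μ₀)⁻¹ : ℝ) * (k : ℂ) * sphj n (k * ω) * (n * sphhNum n 0) ≠ 0) :
    Tendsto (t4' ε₀ μ₀ ω k n) (𝓝[>] 0) (𝓝 (-(sphh n (k * ω) / sphj n (k * ω)))) := by
  have := tendsto_div_of_tendsto_mul (tendsto_pow_mul_sub_mul hω
    (tendsto_pow_mul_sphH n) (tendsto_pow_mul_sphh n)
    (((Real.sqrt μ₀)⁻¹ : ℝ) * k * sphh n (k * ω)) (((Real.sqrt ε₀)⁻¹ : ℝ) * sphH n (k * ω)))
    (tendsto_pow_mul_Dn' (ε₀ := ε₀) hω) hL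
  rw [neg_mul, mul_neg, neg_div, mul_div_mul_right _ _ (right_ne_zero_of_mul hL),
    mul_div_mul_left _ _ (left_ne_zero_of_mul (left_ne_zero_of_mul hL))] at this
  refine this.congr fun ρ => ?_
  rw [t4']
  ring

lemma tendsto_t3_mul_t4'_sub_t4_mul_t3' (hε : 0 < ε₀) (hμ : 0 < μ₀)
    (hk : k = Real.sqrt (μ₀ * ε₀)) (hω : 0 < ω)
    (hL : ((Real.sqrt μ₀)⁻¹ : ℝ) * (k : ℂ) * sphj n (k * ω) * (n * sphhNum n 0) ≠ 0) :
    Tendsto (fun ρ => t3 ε₀ μ₀ ω k n ρ * t4' ε₀ μ₀ ω k n ρ - t4 ε₀ μ₀ ω k n ρ * t3' ε₀ μ₀ ω k n ρ)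
      (𝓝[>] 0) (𝓝 0) := by
  have := (tendsto_div_of_tendsto_mul (tendsto_pow_mul_sub_mul hω
    (tendsto_pow_mul_sphJ n) (tendsto_pow_mul_sphj n)
    (((Real.sqrt μ₀)⁻¹ : ℝ) * k * sphh n (k * ω)) (((Real.sqrt ε₀)⁻¹ : ℝ) * sphH n (k * ω)))
    (tendsto_pow_mul_Dn' (ε₀ := ε₀) hω) hL).neg
  rw [mul_zero, zero_div, neg_zero] at this
  refine this.congr' ?_
  filter_upwards [eventually_Dn'_ne_zero hω hL] with ρ hD
  rw [t3_mul_t4'_sub_t4_mul_t3' hε hμ hk hD]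
  ring

end Cloak

/-- The interior field coefficient `β_ρ` of the approximate cloak with source coefficient `q`
and zero exterior boundary data converges, as `ρ → 0⁺`, to `-(h_n(kω)/j_n(kω)) q`; moreover,
for all small `ρ > 0` the denominators `D'_n(ρ)` and `t₃(ρ)ℋ_n(2ω) + 𝒥_n(2ω)` are nonzero. -/
theorem beta_rho_limit (ε₀ μ₀ ω : ℝ)
    (hε : 0 < ε₀) (hμ : 0 < μ₀) (hω : 0 < ω)
    (k : ℝ) (hk : k = Real.sqrt (μ₀ * ε₀)) (n : ℕ) (hn : 1 ≤ n)
    (hj : sphj n (k * ω) ≠ 0) (hJ2 : sphJ n (2 * ω) ≠ 0) (q : ℂ) :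
    ∃ ρ₀ > (0 : ℝ),
      (∀ ρ : ℝ, 0 < ρ → ρ < ρ₀ → Dn' ε₀ μ₀ ω k n ρ ≠ 0 ∧
        t3 ε₀ μ₀ ω k n ρ * sphH n (2 * ω) + sphJ n (2 * ω) ≠ 0) ∧
      Tendsto (fun ρ : ℝ =>
          q * ((t3 ε₀ μ₀ ω k n ρ * t4' ε₀ μ₀ ω k n ρ
                - t4 ε₀ μ₀ ω k n ρ * t3' ε₀ μ₀ ω k n ρ) * sphH n (2 * ω)
              + t4' ε₀ μ₀ ω k n ρ * sphJ n (2 * ω))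
            / (t3 ε₀ μ₀ ω k n ρ * sphH n (2 * ω) + sphJ n (2 * ω)))
        (𝓝[>] 0) (𝓝 (-(sphh n (k * ω) / sphj n (k * ω)) * q)) := by
  have hL : ((Real.sqrt μ₀)⁻¹ : ℝ) * (k : ℂ) * sphj n (k * ω) * (n * sphhNum n 0) ≠ 0 := by
    have hk0 : 0 < k := hk ▸ Real.sqrt_pos.2 (mul_pos hμ hε)
    refine mul_ne_zero (mul_ne_zero (mul_ne_zero ?_ ?_) ?_)
      (mul_ne_zero ?_ (sphhNum_zero_ne_zero n)) <;> norm_cast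
    · exact inv_ne_zero (Real.sqrt_pos.2 hμ).ne'
    · exact hk0.ne'
    · omega
  have hJ2' : (sphJ n (2 * ω) : ℂ) ≠ 0 := Complex.ofReal_ne_zero.2 hJ2
  have hden : Tendsto (fun ρ => t3 ε₀ μ₀ ω k n ρ * sphH n (2 * ω) + sphJ n (2 * ω)) (𝓝[>] 0)
      (𝓝 (sphJ n (2 * ω))) := by
    simpa using ((tendsto_t3 hω hL).mul_const (sphH n (2 * ω))).add_const (sphJ n (2 * ω) : ℂ)
  obtain ⟨ρ₀, hρ₀, hsmall⟩ := mem_nhdsGT_iff_exists_Ioo_subset.1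
    ((eventually_Dn'_ne_zero hω hL).and (hden.eventually_ne hJ2'))
  refine ⟨ρ₀, hρ₀, fun ρ h₀ h₁ => hsmall ⟨h₀, h₁⟩, ?_⟩
  convert ((((tendsto_t3_mul_t4'_sub_t4_mul_t3' hε hμ hk hω hL).mul_const
    (sphH n (2 * ω))).add ((tendsto_t4' hω hL).mul_const (sphJ n (2 * ω) : ℂ))).const_mul
      q).div hden hJ2' using 2
  · rfl
  · rw [zero_mul, zero_add, mul_div_assoc, mul_div_cancel_right₀ _ hJ2', mul_comm]
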